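/- One has Σ_{x=0}^{(t−1)·(a_n+α)} Δ'(x) − Σ_{x=0}^{(t−1)·a_n} Δ(x) = −t(t−1)/2; equivalently, τ'((t−1)·(a_n+α) + 1) − τ((t−1)·a_n + 1) = −t(t−1)/2. -/

import Mathlib

/-!
By uniqueness of Seifert invariants, enlarging the last fibre from a_n to a_n' = a_n + α keeps
e₀ and b₁, …, b_{n-1} and replaces b_n by b_n + K, where a_n K = α b_n + 1. The part of Δ coming
from the first n - 1 fibres gains K when x is shifted by α, so on each period
(q a_n', (q+1) a_n'] the function Δ' agrees with Δ on (q a_n, (q+1) a_n], shifted by (q+1) α,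
except on the window (q a_n', q a_n' + α]. On that window each ⌈x b_i / a_i⌉ runs through whole
periods, and ⌈x b_n' / a_n'⌉ = ⌈x K / α⌉ runs through one, so the window contributes q + 1 - t.
Summing over q < t - 1 gives -t(t-1)/2.
-/

open Finset

lemma sum_Ioc_add_sum_Ioc {M : Type*} [AddCommMonoid M] (f : ℤ → M) {a b c : ℤ}
    (hab : a ≤ b) (hbc : b ≤ c) :
    ∑ x ∈ Ioc a b, f x + ∑ x ∈ Ioc b c, f x = ∑ x ∈ Ioc a c, f x := by
  rw [← sum_union (Ioc_disjoint_Ioc_of_le le_rfl), Ioc_union_Ioc_eq_Ioc hab hbc]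

lemma sum_Ioc_add_right {M : Type*} [AddCommMonoid M] (f : ℤ → M) (a b c : ℤ) :
    ∑ x ∈ Ioc (a + c) (b + c), f x = ∑ x ∈ Ioc a b, f (x + c) := by
  rw [← map_add_right_Ioc, sum_map]
  rfl

lemma two_mul_sum_Ioc_id (c : ℤ) {N : ℤ} (hN : 0 ≤ N) :
    2 * ∑ x ∈ Ioc c (c + N), x = N * (2 * c + N + 1) := by
  induction N, hN using Int.leInduction with
  | base => simp
  | succ N hN ih =>
    rw [← add_assoc, ← insert_Ioc_right_eq_Ioc_add_one (by omega),
      sum_insert (by simp), mul_add, ih]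
    ring

-- m'/q' = m/q + d/(q q'), and the perturbation d/(q q') lies in (-1/q, 0].
lemma ceil_div_eq_ceil_div {m m' q q' d : ℤ} (hq : 0 < q) (hq' : 0 < q')
    (h : m' * q = m * q' + d) (hd : -q' < d) (hd' : d ≤ 0) :
    ⌈(m' : ℚ) / q'⌉ = ⌈(m : ℚ) / q⌉ := by
  set c := ⌈(m : ℚ) / q⌉ with hc
  have hqQ : (0 : ℚ) < q := by exact_mod_cast hq
  have hqQ' : (0 : ℚ) < q' := by exact_mod_cast hq'
  obtain ⟨hlo, hhi⟩ := Int.ceil_eq_iff.mp hc.symm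
  rw [lt_div_iff₀ hqQ] at hlo
  rw [div_le_iff₀ hqQ] at hhi
  have hlo' : (c - 1) * q < m := by exact_mod_cast hlo
  have hhi' : m ≤ c * q := by exact_mod_cast hhi
  rw [Int.ceil_eq_iff, lt_div_iff₀ hqQ', div_le_iff₀ hqQ']
  constructor
  · have : (c - 1) * q' < m' := by nlinarith
    exact_mod_cast this
  · have : m' ≤ c * q' := by nlinarith
    exact_mod_cast this

lemma ceil_add_mul_mul_div (x m b : ℤ) {a : ℤ} (ha : a ≠ 0) :
    ⌈(((x + m * a : ℤ) : ℚ) * b) / a⌉ = ⌈((x : ℚ) * b) / a⌉ + m * b := by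
  rw [← Int.ceil_add_intCast]
  congr 1
  push_cast
  field_simp

lemma mul_ceil_mul_div (x b : ℤ) {a : ℤ} (ha : 0 < a) :
    a * ⌈((x : ℚ) * b) / a⌉ = x * b + x * -b % a := by
  lift a to ℕ using ha.le
  rw [← Int.cast_mul, Int.cast_natCast, Rat.ceil_intCast_div_natCast]
  have := Int.mul_ediv_add_emod (-(x * b)) a
  rw [show x * -b = -(x * b) by ring]
  linarith

lemma two_mul_sum_Ioc_mul_emod (c : ℤ) {a e : ℤ} (ha : 0 < a) (he : IsCoprime e a) :
    2 * ∑ x ∈ Ioc c (c + a), x * e % a = a * (a - 1) := by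
  have hinj : Set.InjOn (fun x => x * e % a) (Ioc c (c + a)) := by
    intro x hx y hy hxy
    have hdvd : a ∣ (x - y) * e := by
      rw [sub_mul]; exact Int.ModEq.dvd hxy.symm
    have := Int.eq_zero_of_abs_lt_dvd (he.symm.dvd_of_dvd_mul_right hdvd)
    simp only [coe_Ioc, Set.mem_Ioc] at hx hy
    have := this (abs_lt.mpr ⟨by omega, by omega⟩)
    omega
  have himage : (Ioc c (c + a)).image (fun x => x * e % a) = Ico 0 a := by
    refine eq_of_subset_of_card_le (fun r hr => ?_) ?_
    · obtain ⟨x, -, rfl⟩ := mem_image.mp hr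
      exact mem_Ico.mpr ⟨Int.emod_nonneg _ ha.ne', Int.emod_lt_of_pos _ ha⟩
    · rw [card_image_of_injOn hinj, Int.card_Ico, Int.card_Ioc]
      simp
  rw [show ∑ x ∈ Ioc c (c + a), x * e % a = ∑ r ∈ Ico 0 a, r by
      rw [← himage, sum_image hinj],
    show Ico 0 a = Ioc (-1) (-1 + a) by ext; simp only [mem_Ico, mem_Ioc]; omega,
    two_mul_sum_Ioc_id _ ha.le]
  ring

lemma two_mul_sum_Ioc_ceil_mul_div_self (c : ℤ) {a b : ℤ} (ha : 0 < a)
    (hb : IsCoprime b a) :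
    2 * ∑ x ∈ Ioc c (c + a), ⌈((x : ℚ) * b) / a⌉ = b * (2 * c + a + 1) + a - 1 := by
  have key : a * (2 * ∑ x ∈ Ioc c (c + a), ⌈((x : ℚ) * b) / a⌉)
      = a * (b * (2 * c + a + 1) + a - 1) := by
    rw [mul_left_comm, mul_sum, sum_congr rfl fun x _ => mul_ceil_mul_div x b ha,
      sum_add_distrib, mul_add, ← sum_mul, mul_comm (∑ x ∈ _, x) b, ← mul_assoc,
      mul_comm 2 b, mul_assoc, two_mul_sum_Ioc_id c ha.le,
      two_mul_sum_Ioc_mul_emod c ha hb.neg_left]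
    ring
  exact mul_left_cancel₀ ha.ne' key

lemma two_mul_sum_Ioc_ceil_mul_div (c : ℤ) {a b m : ℤ} (ha : 0 < a) (hb : IsCoprime b a)
    (hm : 0 ≤ m) :
    2 * ∑ x ∈ Ioc c (c + m * a), ⌈((x : ℚ) * b) / a⌉
      = m * (b * (2 * c + m * a + 1) + a - 1) := by
  induction m, hm using Int.leInduction with
  | base => simp
  | succ m hm ih =>
    rw [← sum_Ioc_add_sum_Ioc _ (show c ≤ c + m * a by nlinarith) (by nlinarith), mul_add, ih,
      show c + (m + 1) * a = c + m * a + a by ring,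
      two_mul_sum_Ioc_ceil_mul_div_self _ ha hb]
    ring

lemma sum_Icc_sub_sum_Icc_eq_sum_range {D D' w : ℤ → ℤ} {c c' α : ℤ} (hc : 0 < c)
    (hα : 0 ≤ α) (hc' : c' = c + α)
    (hmatch : ∀ q r, -c < r → r ≤ 0 → D' (q * c' + r) = D (q * c + r))
    (hwin : ∀ s, ∑ x ∈ Ioc (s * c') (s * c' + α), D' x = w s) (s : ℕ) :
    ∑ x ∈ Icc 0 (s * c'), D' x - ∑ x ∈ Icc 0 (s * c), D x = ∑ q ∈ range s, w q := by
  have hIcc : ∀ N : ℤ, Icc 0 N = Ioc (-1) N := fun N => by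
    ext x; simp only [mem_Icc, mem_Ioc]; omega
  simp only [hIcc]
  induction s with
  | zero =>
    have h0 : Ioc (-1 : ℤ) 0 = {0} := by ext; simp only [mem_Ioc, mem_singleton]; omega
    have h00 := hmatch 0 0 (by omega) le_rfl
    simp only [zero_mul, add_zero] at h00
    simp [h0, h00]
  | succ k ih =>
    set q : ℤ := (k : ℤ)
    have hq : 0 ≤ q := Int.natCast_nonneg k
    have hshift : ∑ x ∈ Ioc (q * c' + α) ((q + 1) * c'), D' x
        = ∑ x ∈ Ioc (q * c) ((q + 1) * c), D x := by
      rw [show q * c' + α = q * c + (q + 1) * α by rw [hc']; ring,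
        show (q + 1) * c' = (q + 1) * c + (q + 1) * α by rw [hc']; ring, sum_Ioc_add_right]
      refine sum_congr rfl fun x hx => ?_
      rw [mem_Ioc] at hx
      rw [show x + (q + 1) * α = (q + 1) * c' + (x - (q + 1) * c) by rw [hc']; ring,
        hmatch _ _ (by linarith) (by linarith)]
      ring_nf
    have hsplit' : ∑ x ∈ Ioc (-1) ((q + 1) * c'), D' x
        = ∑ x ∈ Ioc (-1) (q * c'), D' x + ∑ x ∈ Ioc (q * c') (q * c' + α), D' x
          + ∑ x ∈ Ioc (q * c' + α) ((q + 1) * c'), D' x := by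
      rw [sum_Ioc_add_sum_Ioc _ (by nlinarith) (by linarith),
        sum_Ioc_add_sum_Ioc _ (by nlinarith) (by nlinarith)]
    have hsplit : ∑ x ∈ Ioc (-1) ((q + 1) * c), D x
        = ∑ x ∈ Ioc (-1) (q * c), D x + ∑ x ∈ Ioc (q * c) ((q + 1) * c), D x :=
      (sum_Ioc_add_sum_Ioc _ (by nlinarith) (by nlinarith)).symm
    push_cast
    rw [sum_range_succ, ← ih, ← hwin, hsplit', hsplit, hshift]
    ring

lemma sum_range_sub_eq_neg (s : ℕ) : ∑ q ∈ range s, ((q : ℤ) - s) = -((s + 1) * s / 2) := by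
  have hgauss : ∀ (m : ℕ) (t : ℤ), 2 * ∑ q ∈ range m, ((q : ℤ) - t) = m * (m - 1) - 2 * m * t := by
    intro m t
    induction m with
    | zero => simp
    | succ k ih =>
      rw [sum_range_succ, mul_add, ih]
      push_cast
      ring
  have h := hgauss s s
  have h' : 2 * ∑ q ∈ range s, ((q : ℤ) - s) = -((s + 1) * s) := by linear_combination h
  omega

-- The Δ-function of all but the last fibre, with |e| written as -e (the relevant case e < 0).
def seifertDelta {ι : Type*} [Fintype ι] (e : ℤ) (a b : ι → ℤ) (x : ℤ) : ℤ :=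
  1 - e * x - ∑ i, ⌈((x : ℚ) * b i) / a i⌉

section Seifert

lemma dvd_cofactor_of_ne {ι : Type*} {a : ι → ℤ} {α : ℤ}
    (hcop : ∀ i j, i ≠ j → IsCoprime (a i) (a j)) (hdvd : ∀ i, a i ∣ α) {i j : ι}
    (hij : i ≠ j) : a i ∣ α / a j := by
  refine (hcop i j hij).dvd_of_dvd_mul_left ?_
  rw [Int.mul_ediv_cancel' (hdvd j)]
  exact hdvd i

variable {ι : Type*} [Fintype ι] {a b : ι → ℤ} {e α K : ℤ}

lemma dvd_mul_cofactor_add_one (hcop : ∀ i j, i ≠ j → IsCoprime (a i) (a j))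
    (hdvd : ∀ i, a i ∣ α) {c d : ℤ}
    (h : (e * α + ∑ j, b j * (α / a j)) * c + d * α = -1) (i : ι) :
    a i ∣ b i * (α / a i * c) + 1 := by
  classical
  rw [← add_sum_erase _ _ (mem_univ i)] at h
  have hrest : a i ∣ ∑ j ∈ univ.erase i, b j * (α / a j) :=
    dvd_sum fun j hj => (dvd_cofactor_of_ne hcop hdvd (ne_of_mem_erase hj).symm).mul_left _
  have key : b i * (α / a i * c) + 1
      = -((e * α + ∑ j ∈ univ.erase i, b j * (α / a j)) * c + d * α) := by
    linear_combination h
  rw [key, dvd_neg]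
  exact dvd_add (((hdvd i).mul_left e |>.add hrest).mul_right c) ((hdvd i).mul_left d)

lemma isCoprime_of_seifert_eq (hcop : ∀ i j, i ≠ j → IsCoprime (a i) (a j))
    (hdvd : ∀ i, a i ∣ α) {c d : ℤ}
    (h : (e * α + ∑ j, b j * (α / a j)) * c + d * α = -1) (i : ι) :
    IsCoprime (b i) (a i) := by
  obtain ⟨k, hk⟩ := dvd_mul_cofactor_add_one hcop hdvd h i
  exact ⟨-(α / a i * c), k, by linear_combination -hk⟩

lemma eq_of_dvd_mul_add_one {m u x y : ℤ} (hx : m ∣ x * u + 1) (hy : m ∣ y * u + 1)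
    (hx₀ : 0 ≤ x) (hxm : x < m) (hy₀ : 0 ≤ y) (hym : y < m) : x = y := by
  obtain ⟨k, hk⟩ := id hx
  have hu : IsCoprime m u := ⟨k, -x, by linear_combination -hk⟩
  have := hu.dvd_of_dvd_mul_right (by simpa [sub_mul] using dvd_sub hy hx : m ∣ (y - x) * u)
  have := Int.eq_zero_of_abs_lt_dvd this (abs_lt.mpr ⟨by omega, by omega⟩)
  omega

lemma seifert_invariants_add_last (hcop : ∀ i j, i ≠ j → IsCoprime (a i) (a j))
    (hdvd : ∀ i, a i ∣ α) (hα : 0 < α) {c d e' d' : ℤ} {b' : ι → ℤ}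
    (hK : e * α + ∑ i, b i * (α / a i) = -K) (hKc : c * K = α * d + 1)
    (hb : ∀ i, 0 ≤ b i ∧ b i < a i) (hd : 0 ≤ d ∧ d < c)
    (hb' : ∀ i, 0 ≤ b' i ∧ b' i < a i) (hd' : 0 ≤ d' ∧ d' < c + α)
    (h' : (e' * α + ∑ i, b' i * (α / a i)) * (c + α) + d' * α = -1) :
    b = b' ∧ e = e' ∧ d' = d + K := by
  have h : (e * α + ∑ i, b i * (α / a i)) * c + d * α = -1 := by
    rw [hK]; linear_combination -hKc
  have hbb' : b = b' := funext fun i => by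
    have h₁ := dvd_mul_cofactor_add_one hcop hdvd h' i
    have h₂ : a i ∣ b' i * (α / a i * c) + 1 := by
      have := (hdvd i).mul_left (b' i * (α / a i))
      rw [show b' i * (α / a i * c) + 1 = b' i * (α / a i * (c + α)) + 1
        - b' i * (α / a i) * α by ring]
      exact dvd_sub h₁ this
    exact eq_of_dvd_mul_add_one (dvd_mul_cofactor_add_one hcop hdvd h i) h₂
      (hb i).1 (hb i).2 (hb' i).1 (hb' i).2
  subst hbb'
  have hK₀ : 0 < K := by nlinarith
  have hd'K : d' = d + K := by
    refine eq_of_dvd_mul_add_one (m := c + α) (u := α)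
      ⟨-(e' * α + ∑ i, b i * (α / a i)), ?_⟩ ⟨K, ?_⟩ hd'.1 hd'.2 (by omega)
      (by nlinarith)
    · linear_combination h'
    · linear_combination -hKc
  refine ⟨rfl, ?_, hd'K⟩
  subst hd'K
  have : (e' - e) * (α * (c + α)) = 0 := by
    linear_combination h' - (c + α) * hK + hKc
  rcases mul_eq_zero.mp this with h0 | h0
  · omega
  · nlinarith

lemma seifert_eq_factor (hdvd : ∀ i, a i ∣ α) {c d : ℤ}
    (h : e * (α * c) + ∑ i, b i * (α * c / a i) + d * α = -1) :
    (e * α + ∑ i, b i * (α / a i)) * c + d * α = -1 := by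
  have hsum : ∑ i, b i * (α * c / a i) = (∑ i, b i * (α / a i)) * c := by
    rw [sum_mul]
    exact sum_congr rfl fun i _ => by rw [Int.mul_ediv_assoc' c (hdvd i), mul_assoc]
  linear_combination h - hsum

lemma two_mul_sum_ediv_le (ha : ∀ i, 2 ≤ a i) (hdvd : ∀ i, a i ∣ α) (hα : 0 ≤ α) :
    2 * ∑ i, α / a i ≤ Fintype.card ι * α := by
  rw [mul_sum, ← nsmul_eq_mul, ← card_univ, ← sum_const]
  refine sum_le_sum fun i _ => ?_
  calc 2 * (α / a i) ≤ a i * (α / a i) :=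
        mul_le_mul_of_nonneg_right (ha i) (Int.ediv_nonneg hα (by linarith [ha i]))
    _ = α := Int.mul_ediv_cancel' (hdvd i)

lemma one_le_of_two_mul_eq_sub_sum_ediv (ha : ∀ i, 2 ≤ a i) (hdvd : ∀ i, a i ∣ α)
    (hα : 0 < α) (hι : 2 ≤ Fintype.card ι) {t : ℤ}
    (ht : 2 * t = ((Fintype.card ι : ℤ) - 1) * α - ∑ i, α / a i + 1) : 1 ≤ t := by
  have := two_mul_sum_ediv_le ha hdvd hα.le
  have : (2 : ℤ) ≤ Fintype.card ι := by exact_mod_cast hι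
  nlinarith

lemma neg_of_seifert_eq (ha : ∀ i, 0 < a i) (hα : 0 < α) (hb : ∀ i, 0 ≤ b i) {c d : ℤ}
    (hc : 0 < c) (hd : 0 ≤ d) (h : (e * α + ∑ i, b i * (α / a i)) * c + d * α = -1) :
    e < 0 := by
  have hS : 0 ≤ ∑ i, b i * (α / a i) :=
    sum_nonneg fun i _ => mul_nonneg (hb i) (Int.ediv_nonneg hα.le (ha i).le)
  by_contra! he
  have : 0 ≤ (e * α + ∑ i, b i * (α / a i)) * c :=
    mul_nonneg (add_nonneg (mul_nonneg he hα.le) hS) hc.le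
  nlinarith [mul_nonneg hd hα.le]

lemma seifertDelta_add_mul (ha : ∀ i, 0 < a i) (hdvd : ∀ i, a i ∣ α)
    (hK : e * α + ∑ i, b i * (α / a i) = -K) (x m : ℤ) :
    seifertDelta e a b (x + m * α) = seifertDelta e a b x + m * K := by
  have hceil : ∀ i, ⌈(((x + m * α : ℤ) : ℚ) * b i) / a i⌉
      = ⌈((x : ℚ) * b i) / a i⌉ + m * (α / a i) * b i := fun i => by
    rw [← ceil_add_mul_mul_div x (m * (α / a i)) (b i) (ha i).ne', mul_assoc,
      Int.ediv_mul_cancel (hdvd i)]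
  simp only [seifertDelta]
  rw [sum_congr rfl fun i _ => hceil i, sum_add_distrib]
  have : ∑ i, m * (α / a i) * b i = m * ∑ i, b i * (α / a i) := by
    rw [mul_sum]; exact sum_congr rfl fun i _ => by ring
  rw [this]
  linear_combination -m * hK

lemma two_mul_sum_Ioc_seifertDelta (ha : ∀ i, 0 < a i) (hdvd : ∀ i, a i ∣ α)
    (hb : ∀ i, IsCoprime (b i) (a i)) (hα : 0 ≤ α)
    (hK : e * α + ∑ i, b i * (α / a i) = -K) (c : ℤ) :
    2 * ∑ x ∈ Ioc c (c + α), seifertDelta e a b x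
      = 2 * α + K * (2 * c + α + 1) - ∑ i, (α - α / a i) := by
  have hfiber : ∀ i, 2 * ∑ x ∈ Ioc c (c + α), ⌈((x : ℚ) * b i) / a i⌉
      = (2 * c + α + 1) * (b i * (α / a i)) + (α - α / a i) := fun i => by
    have hαi : α / a i * a i = α := Int.ediv_mul_cancel (hdvd i)
    conv_lhs => rw [← hαi]
    rw [two_mul_sum_Ioc_ceil_mul_div c (ha i) (hb i) (Int.ediv_nonneg hα (ha i).le)]
    linear_combination (α / a i * b i + 1) * hαi
  have hcard : ∑ x ∈ Ioc c (c + α), (1 : ℤ) = α := by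
    rw [sum_const, Int.card_Ioc, add_sub_cancel_left, nsmul_one, Int.toNat_of_nonneg hα]
  have hceil : 2 * ∑ i, ∑ x ∈ Ioc c (c + α), ⌈((x : ℚ) * b i) / a i⌉
      = (2 * c + α + 1) * ∑ i, b i * (α / a i) + ∑ i, (α - α / a i) := by
    rw [mul_sum, sum_congr rfl fun i _ => hfiber i, sum_add_distrib, mul_sum]
  simp only [seifertDelta]
  rw [sum_sub_distrib, sum_sub_distrib, sum_comm (s := Ioc c (c + α)), ← mul_sum]
  linear_combination 2 * hcard - e * two_mul_sum_Ioc_id c hα - hceil - (2 * c + α + 1) * hK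

lemma two_mul_sum_Ioc_ceil_mul_div_of_lt {c d : ℤ} (hα : 0 < α) (hαc : α < c)
    (hK : c * K = α * d + 1) (s : ℤ) :
    2 * ∑ x ∈ Ioc (s * c) (s * c + α), ⌈((x : ℚ) * d) / c⌉
      = 2 * s * α * d + K * (α + 1) + α - 1 := by
  -- c K = α d + 1 puts d/c just below K/α, close enough for the ceilings to agree on (0, α].
  have hceil : ∀ x ∈ Ioc 0 α,
      ⌈(((x + s * c : ℤ) : ℚ) * d) / c⌉ = ⌈((x : ℚ) * K) / α⌉ + s * d := by
    intro x hx
    rw [mem_Ioc] at hx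
    rw [ceil_add_mul_mul_div x s d (by omega : c ≠ 0)]
    congr 1
    exact_mod_cast ceil_div_eq_ceil_div (m' := x * d) (m := x * K) (d := -x) hα (by omega)
      (by linear_combination -x * hK) (by omega) (by omega)
  rw [show Ioc (s * c) (s * c + α) = Ioc (0 + s * c) (α + s * c) by ring_nf,
    sum_Ioc_add_right, sum_congr rfl hceil, sum_add_distrib, sum_const, Int.card_Ioc,
    sub_zero, nsmul_eq_mul, Int.toNat_of_nonneg hα.le, mul_add]
  have hperiod :=
    two_mul_sum_Ioc_ceil_mul_div_self 0 hα (b := K) ⟨c, -d, by linear_combination hK⟩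
  rw [zero_add] at hperiod
  linear_combination hperiod

lemma seifertDelta_sub_ceil_add_period (ha : ∀ i, 0 < a i) (hdvd : ∀ i, a i ∣ α)
    (hK : e * α + ∑ i, b i * (α / a i) = -K) {c c' d d' : ℤ} (hc : 0 < c) (hα : 0 ≤ α)
    (hc' : c' = c + α) (hd' : d' = d + K) (hKc : c * K = α * d + 1) (q : ℤ) {r : ℤ}
    (hr : -c < r) (hr' : r ≤ 0) :
    seifertDelta e a b (q * c' + r) - ⌈(((q * c' + r : ℤ) : ℚ) * d') / c'⌉
      = seifertDelta e a b (q * c + r) - ⌈(((q * c + r : ℤ) : ℚ) * d) / c⌉ := by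
  have hdelta : seifertDelta e a b (q * c' + r) = seifertDelta e a b (q * c + r) + q * K := by
    rw [← seifertDelta_add_mul ha hdvd hK, hc']
    ring_nf
  have hfar : ⌈((r : ℚ) * d') / c'⌉ = ⌈((r : ℚ) * d) / c⌉ := by
    exact_mod_cast ceil_div_eq_ceil_div (m' := r * d') (m := r * d) (d := r) hc (by omega)
      (by rw [hc', hd']; linear_combination r * hKc) (by omega) hr'
  rw [hdelta, add_comm (q * c'), add_comm (q * c), ceil_add_mul_mul_div r q d' (by omega),
    ceil_add_mul_mul_div r q d hc.ne', hfar, hd']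
  ring

lemma sum_Ioc_seifertDelta_sub_ceil (ha : ∀ i, 0 < a i) (hdvd : ∀ i, a i ∣ α)
    (hb : ∀ i, IsCoprime (b i) (a i)) (hα : 0 < α) (hK : e * α + ∑ i, b i * (α / a i) = -K)
    {c d t : ℤ} (hαc : α < c) (hKc : c * K = α * d + 1)
    (ht : 2 * t = ((Fintype.card ι : ℤ) - 1) * α - ∑ i, α / a i + 1) (s : ℤ) :
    ∑ x ∈ Ioc (s * c) (s * c + α), (seifertDelta e a b x - ⌈((x : ℚ) * d) / c⌉)
      = s + 1 - t := by
  have hcofactors : ∑ i, (α - α / a i) = Fintype.card ι * α - ∑ i, α / a i := by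
    rw [sum_sub_distrib, sum_const, nsmul_eq_mul, card_univ]
  have h₁ := two_mul_sum_Ioc_seifertDelta ha hdvd hb hα.le hK (s * c)
  have h₂ := two_mul_sum_Ioc_ceil_mul_div_of_lt hα hαc hKc s
  rw [sum_sub_distrib]
  have : 2 * (∑ x ∈ Ioc (s * c) (s * c + α), seifertDelta e a b x
      - ∑ x ∈ Ioc (s * c) (s * c + α), ⌈((x : ℚ) * d) / c⌉) = 2 * (s + 1 - t) := by
    linear_combination h₁ - h₂ + 2 * s * hKc + ht - hcofactors
  linarith

end Seifert

theorem stmt_17_general (n : ℕ) (hn : 3 ≤ n) (a : Fin (n - 1) → ℤ) (an : ℤ)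
    (ha : ∀ i, 2 ≤ a i)
    (hcop : ∀ i j, i ≠ j → IsCoprime (a i) (a j))
    (α P : ℤ) (hα : α = ∏ i, a i) (hP : P = α * an)
    (e0 : ℤ) (b : Fin (n - 1) → ℤ) (bn : ℤ)
    (hb : ∀ i, 1 ≤ b i ∧ b i < a i) (hbn : 1 ≤ bn ∧ bn < an)
    (heq : e0 * P + (∑ i, b i * (P / a i)) + bn * α = -1)
    (Δ : ℤ → ℤ)
    (hΔ : ∀ x : ℤ, Δ x = 1 + |e0| * x -
      ((∑ i, ⌈(x * b i : ℚ) / (a i : ℚ)⌉) + ⌈(x * bn : ℚ) / (an : ℚ)⌉))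
    -- the modified Seifert data with last fiber an' = an + α
    (an' P' : ℤ) (han' : an' = an + α) (hP' : P' = α * an')
    (e0' : ℤ) (b' : Fin (n - 1) → ℤ) (bn' : ℤ)
    (hb' : ∀ i, 1 ≤ b' i ∧ b' i < a i) (hbn' : 1 ≤ bn' ∧ bn' < an')
    (heq' : e0' * P' + (∑ i, b' i * (P' / a i)) + bn' * α = -1)
    (Δ' : ℤ → ℤ)
    (hΔ' : ∀ x : ℤ, Δ' x = 1 + |e0'| * x -
      ((∑ i, ⌈(x * b' i : ℚ) / (a i : ℚ)⌉) + ⌈(x * bn' : ℚ) / (an' : ℚ)⌉))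
    (t : ℤ) (ht : 2 * t = ((n : ℤ) - 2) * α - (∑ i, α / a i) + 1) :
    (∑ x ∈ Finset.Icc (0 : ℤ) ((t - 1) * (an + α)), Δ' x) -
      (∑ x ∈ Finset.Icc (0 : ℤ) ((t - 1) * an), Δ x) = -(t * (t - 1) / 2) := by
  have ha₀ : ∀ i, 0 < a i := fun i => by linarith [ha i]
  have hα₀ : 0 < α := hα ▸ prod_pos fun i _ => ha₀ i
  have hdvd : ∀ i, a i ∣ α := fun i => hα ▸ dvd_prod_of_mem a (mem_univ i)
  subst hP hP'
  replace heq := seifert_eq_factor hdvd heq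
  replace heq' := han' ▸ seifert_eq_factor hdvd heq'
  obtain ⟨K, hK⟩ : ∃ K, e0 * α + ∑ i, b i * (α / a i) = -K := ⟨_, (neg_neg _).symm⟩
  have hKan : an * K = α * bn + 1 := by linear_combination an * hK - heq
  obtain ⟨rfl, rfl, hbnK⟩ := seifert_invariants_add_last hcop hdvd hα₀ hK hKan
    (fun i => ⟨by linarith [hb i], (hb i).2⟩) ⟨by omega, hbn.2⟩
    (fun i => ⟨by linarith [hb' i], (hb' i).2⟩) ⟨by omega, han' ▸ hbn'.2⟩ heq'
  have he0 := neg_of_seifert_eq ha₀ hα₀ (fun i => by linarith [hb i]) (by omega) (by omega) heq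
  have hΔeq : ∀ x, Δ x = seifertDelta e0 a b x - ⌈((x : ℚ) * bn) / an⌉ := fun x => by
    rw [hΔ, abs_of_neg he0, seifertDelta]; ring
  have hΔeq' : ∀ x, Δ' x = seifertDelta e0 a b x - ⌈((x : ℚ) * bn') / an'⌉ := fun x => by
    rw [hΔ', abs_of_neg he0, seifertDelta]; ring
  have ht' : 2 * t = ((Fintype.card (Fin (n - 1)) : ℤ) - 1) * α - ∑ i, α / a i + 1 := by
    rw [Fintype.card_fin, Nat.cast_sub (by omega)]
    linear_combination ht
  have ht₁ := one_le_of_two_mul_eq_sub_sum_ediv ha hdvd hα₀ (by rw [Fintype.card_fin]; omega) ht'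
  obtain ⟨s, rfl⟩ : ∃ s : ℕ, t = s + 1 := ⟨(t - 1).toNat, by omega⟩
  have hmatch (q r : ℤ) (hr : -an < r) (hr' : r ≤ 0) : Δ' (q * an' + r) = Δ (q * an + r) := by
    rw [hΔeq, hΔeq']
    exact seifertDelta_sub_ceil_add_period ha₀ hdvd hK (by omega) hα₀.le han' hbnK hKan q hr
      hr'
  have hwindow (q : ℤ) : ∑ x ∈ Ioc (q * an') (q * an' + α), Δ' x = q - s := by
    simp_rw [hΔeq']
    rw [sum_Ioc_seifertDelta_sub_ceil ha₀ hdvd (isCoprime_of_seifert_eq hcop hdvd heq) hα₀ hK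
      (by omega) (by rw [han', hbnK]; linear_combination hKan) ht' q]
    ring
  rw [← han', add_sub_cancel_right, sum_Icc_sub_sum_Icc_eq_sum_range (by omega) hα₀.le han'
    hmatch hwindow s, sum_range_sub_eq_neg]

/-- Σ_{x=0}^{(t−1)·(a_n+α)} Δ′(x) − Σ_{x=0}^{(t−1)·a_n} Δ(x) = −t(t−1)/2, i.e. τ′((t−1)·(a_n+α)+1) − τ((t−1)·a_n+1) = −t(t−1)/2. -/
theorem stmt_17 (n : ℕ) (hn : 3 ≤ n) (a : Fin (n - 1) → ℤ) (an : ℤ)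
    (ha : ∀ i, 2 ≤ a i) (han : 2 ≤ an)
    (hcop : ∀ i j, i ≠ j → IsCoprime (a i) (a j))
    (hcopn : ∀ i, IsCoprime (a i) an)
    (α P : ℤ) (hα : α = ∏ i, a i) (hP : P = α * an)
    (e0 : ℤ) (b : Fin (n - 1) → ℤ) (bn : ℤ)
    (hb : ∀ i, 1 ≤ b i ∧ b i < a i) (hbn : 1 ≤ bn ∧ bn < an)
    (heq : e0 * P + (∑ i, b i * (P / a i)) + bn * α = -1)
    (Δ : ℤ → ℤ)
    (hΔ : ∀ x : ℤ, Δ x = 1 + |e0| * x -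
      ((∑ i, ⌈(x * b i : ℚ) / (a i : ℚ)⌉) + ⌈(x * bn : ℚ) / (an : ℚ)⌉))
    -- the modified Seifert data with last fiber an' = an + α
    (an' P' : ℤ) (han' : an' = an + α) (hP' : P' = α * an')
    (e0' : ℤ) (b' : Fin (n - 1) → ℤ) (bn' : ℤ)
    (hb' : ∀ i, 1 ≤ b' i ∧ b' i < a i) (hbn' : 1 ≤ bn' ∧ bn' < an')
    (heq' : e0' * P' + (∑ i, b' i * (P' / a i)) + bn' * α = -1)
    (Δ' : ℤ → ℤ)
    (hΔ' : ∀ x : ℤ, Δ' x = 1 + |e0'| * x -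
      ((∑ i, ⌈(x * b' i : ℚ) / (a i : ℚ)⌉) + ⌈(x * bn' : ℚ) / (an' : ℚ)⌉))
    (t : ℤ) (ht : 2 * t = ((n : ℤ) - 2) * α - (∑ i, α / a i) + 1) :
    (∑ x ∈ Finset.Icc (0 : ℤ) ((t - 1) * (an + α)), Δ' x) -
      (∑ x ∈ Finset.Icc (0 : ℤ) ((t - 1) * an), Δ x) = -(t * (t - 1) / 2) :=
  stmt_17_general n hn a an ha hcop α P hα hP e0 b bn hb hbn heq Δ hΔ an' P' han' hP' e0' b' bn' hb'
    hbn' heq' Δ' hΔ' t ht
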